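/- Let bᵢⱼ ∈ ℤ (1 ≤ i,j ≤ n) be such that the map F with Fᵢ(X) = Xᵢ + (Σⱼ bᵢⱼXⱼ)³ is a Keller map, let w = (w₁,...,wₙ) ∈ ℤⁿ have all wᵢ ≠ 0, and set vᵢ := wᵢ³ and δ := v₁v₂⋯vₙ. Define aᵢⱼ := wᵢ·(Π_{k≠i} w_k²)·wⱼ³·bᵢⱼ ∈ ℤ. Then the map G with Gᵢ(X) = Xᵢ + (Σⱼ aᵢⱼXⱼ)³ is a Keller map in ℤ[X₁,...,Xₙ]ⁿ, and for every x ∈ ℤⁿ with G₁(x) = G₂(x) = ⋯ = Gₙ(x) the point y := (δv₁x₁, δv₂x₂, ..., δvₙxₙ) satisfies F(y) = t·v for some t ∈ ℚ. -/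

import Mathlib

open MvPolynomial

/-- A polynomial map `F = (F₁,...,Fₙ)` is a Keller map if the determinant of its
Jacobian matrix `(∂Fᵢ/∂Xⱼ)` is identically `1`. -/
def IsKeller {R : Type*} [CommRing R] {n : ℕ} (F : Fin n → MvPolynomial (Fin n) R) : Prop :=
  Matrix.det (Matrix.of fun i j => pderiv j (F i)) = 1

/-- The polynomial map of linear cubic form `Fᵢ(X) = Xᵢ + (aᵢ₁X₁ + ⋯ + aᵢₙXₙ)³`. -/
noncomputable def cubicLinear {R : Type*} [CommRing R] {n : ℕ} (a : Fin n → Fin n → R) :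
    Fin n → MvPolynomial (Fin n) R :=
  fun i => X i + (∑ j, C (a i j) * X j) ^ 3

/-!
Write `aᵢⱼ = cᵢ bᵢⱼ vⱼ` with `cᵢ = wᵢ ∏_{k≠i} w_k²`, so that `vᵢ cᵢ³ = δ²` for every `i`.
The Jacobian matrix of `G` is then `1 + M D` with `D = diag(v)` and
`Mᵢⱼ = 3 cᵢ³ (∑ₗ bᵢₗ vₗ Xₗ)² bᵢⱼ`, while substituting `Xₗ ↦ δ vₗ Xₗ` into the Jacobian matrix
of `F` gives `1 + D M`. The Weinstein–Aronszajn identity `det (1 + M D) = det (1 + D M)`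
transfers the Keller property from `F` to `G`, and the same relation `vᵢ cᵢ³ = δ²` gives
`Fᵢ(δ v x) = δ vᵢ Gᵢ(x)`, which is proportional to `v` as soon as `G(x)` is constant.
-/

variable {R : Type*} [CommRing R] {n : ℕ}

noncomputable def jacobian (F : Fin n → MvPolynomial (Fin n) R) :
    Matrix (Fin n) (Fin n) (MvPolynomial (Fin n) R) :=
  Matrix.of fun i j => pderiv j (F i)

theorem pderiv_sum_C_mul_X (a : Fin n → R) (j : Fin n) :
    pderiv j (∑ l, C (a l) * X l : MvPolynomial (Fin n) R) = C (a j) := by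
  simp [pderiv_X, Pi.single_apply]

theorem jacobian_cubicLinear (a : Fin n → Fin n → R) :
    jacobian (cubicLinear a) =
      1 + Matrix.of fun i j => 3 * (∑ l, C (a i l) * X l) ^ 2 * C (a i j) := by
  ext i j : 1
  rw [jacobian, Matrix.of_apply, cubicLinear, map_add, pderiv_X, pderiv_pow,
    pderiv_sum_C_mul_X, Matrix.add_apply, Matrix.of_apply, Matrix.one_apply, Pi.single_apply]
  simp only [Nat.cast_ofNat]

theorem det_jacobian_cubicLinear_rescale (b : Fin n → Fin n → R) (c v : Fin n → R) (μ : R)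
    (h : ∀ i, v i * c i ^ 3 = μ ^ 2) :
    (jacobian (cubicLinear fun i j => c i * b i j * v j)).det =
      aeval (fun l => C (μ * v l) * X l) (jacobian (cubicLinear b)).det := by
  set U : Fin n → MvPolynomial (Fin n) R := fun i => ∑ l, C (b i l * v l) * X l
  set M : Matrix (Fin n) (Fin n) (MvPolynomial (Fin n) R) :=
    Matrix.of fun i j => 3 * C (c i) ^ 3 * U i ^ 2 * C (b i j)
  have hG : jacobian (cubicLinear fun i j => c i * b i j * v j) =
      1 + M * Matrix.diagonal fun i => C (v i) := by
    rw [jacobian_cubicLinear]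
    ext i j : 1
    have hU : ∑ l, C (c i * b i l * v l) * X l = C (c i) * U i := by
      simp only [U, Finset.mul_sum, map_mul]
      exact Finset.sum_congr rfl fun l _ => by ring
    simp only [Matrix.add_apply, Matrix.of_apply, Matrix.mul_diagonal, M]
    rw [hU]
    simp only [map_mul]
    ring
  have hF : (jacobian (cubicLinear b)).map (aeval fun l => C (μ * v l) * X l) =
      1 + Matrix.diagonal (fun i => C (v i)) * M := by
    rw [jacobian_cubicLinear]
    ext i j : 1
    have hU : aeval (fun l => C (μ * v l) * X l) (∑ l, C (b i l) * X l) = C μ * U i := by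
      simp only [U, Finset.mul_sum, map_sum, map_mul, aeval_C, aeval_X, algebraMap_eq]
      exact Finset.sum_congr rfl fun l _ => by ring
    simp only [Matrix.map_apply, Matrix.add_apply, Matrix.of_apply, Matrix.diagonal_mul, M]
    rw [map_add, map_mul, map_mul, map_pow, hU]
    simp only [map_mul, map_ofNat, aeval_C, algebraMap_eq, Matrix.one_apply,
      apply_ite, map_one, map_zero]
    have hC : C (v i) * C (c i) ^ 3 = (C μ ^ 2 : MvPolynomial (Fin n) R) := by
      rw [← map_pow, ← map_mul, ← map_pow, h]
    linear_combination (-(3 * U i ^ 2 * C (b i j))) * hC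
  rw [AlgHom.map_det, AlgHom.mapMatrix_apply, hF, hG, Matrix.det_one_add_mul_comm]

theorem IsKeller.cubicLinear_rescale {b : Fin n → Fin n → R} (hF : IsKeller (cubicLinear b))
    (c v : Fin n → R) (μ : R) (h : ∀ i, v i * c i ^ 3 = μ ^ 2) :
    IsKeller (cubicLinear fun i j => c i * b i j * v j) := by
  change (jacobian _).det = 1
  rw [det_jacobian_cubicLinear_rescale b c v μ h, show (jacobian (cubicLinear b)).det = 1 from hF,
    map_one]

theorem eval_cubicLinear_rescale (b : Fin n → Fin n → R) (c v : Fin n → R) (μ : R)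
    (h : ∀ i, v i * c i ^ 3 = μ ^ 2) (x : Fin n → R) (i : Fin n) :
    eval (fun k => μ * v k * x k) (cubicLinear b i) =
      μ * v i * eval x (cubicLinear (fun i j => c i * b i j * v j) i) := by
  set S := ∑ j, b i j * v j * x j
  have hb : ∑ j, b i j * (μ * v j * x j) = μ * S := by
    rw [Finset.mul_sum]; exact Finset.sum_congr rfl fun j _ => by ring
  have ha : ∑ j, c i * b i j * v j * x j = c i * S := by
    rw [Finset.mul_sum]; exact Finset.sum_congr rfl fun j _ => by ring
  simp only [cubicLinear, eval_add, eval_pow, eval_sum, eval_mul, eval_C, eval_X, hb, ha]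
  linear_combination (-(μ * S ^ 3)) * h i

theorem pow_three_mul_prod_erase_pow_eq {ι M : Type*} [CommMonoid M] [Fintype ι] [DecidableEq ι]
    (w : ι → M) (i : ι) :
    w i ^ 3 * (w i * ∏ k ∈ Finset.univ.erase i, w k ^ 2) ^ 3 = (∏ k, w k ^ 3) ^ 2 :=
  calc w i ^ 3 * (w i * ∏ k ∈ Finset.univ.erase i, w k ^ 2) ^ 3
      = (w i ^ 2 * ∏ k ∈ Finset.univ.erase i, w k ^ 2) ^ 3 := by
        rw [mul_pow, mul_pow, ← mul_assoc, ← pow_add, ← pow_mul]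
    _ = ((∏ k, w k) ^ 2) ^ 3 := by
      rw [Finset.mul_prod_erase _ (fun k => w k ^ 2) (Finset.mem_univ i), Finset.prod_pow]
    _ = (∏ k, w k ^ 3) ^ 2 := by rw [Finset.prod_pow, ← pow_mul, ← pow_mul]

theorem stmt15_general {n : ℕ} (b : Fin n → Fin n → ℤ)
    (hF : IsKeller (cubicLinear b))
    (w : Fin n → ℤ)
    (v : Fin n → ℤ) (hv : ∀ i, v i = w i ^ 3)
    (δ : ℤ) (hδ : δ = ∏ i, v i)
    (a : Fin n → Fin n → ℤ)
    (ha : ∀ i j, a i j = w i * (∏ k ∈ Finset.univ.erase i, w k ^ 2) * w j ^ 3 * b i j) :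
    IsKeller (cubicLinear a) ∧
    ∀ x : Fin n → ℤ,
      (∀ i j, eval x (cubicLinear a i) = eval x (cubicLinear a j)) →
      ∃ t : ℚ, ∀ i, ((eval (fun k => δ * v k * x k) (cubicLinear b i) : ℤ) : ℚ)
        = t * (v i : ℚ) := by
  set c : Fin n → ℤ := fun i => w i * ∏ k ∈ Finset.univ.erase i, w k ^ 2
  have hvc : ∀ i, v i * c i ^ 3 = δ ^ 2 := by
    intro i
    rw [hv, hδ, Finset.prod_congr rfl fun k _ => hv k]
    exact pow_three_mul_prod_erase_pow_eq w i
  obtain rfl : a = fun i j => c i * b i j * v j := by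
    funext i j; rw [ha, hv]; ring
  refine ⟨hF.cubicLinear_rescale c v δ hvc, fun x hx => ?_⟩
  rcases isEmpty_or_nonempty (Fin n) with _ | ⟨⟨i₀⟩⟩
  · exact ⟨0, isEmptyElim⟩
  refine ⟨δ * eval x (cubicLinear (fun i j => c i * b i j * v j) i₀), fun i => ?_⟩
  rw [eval_cubicLinear_rescale b c v δ hvc, hx i i₀]
  push_cast
  ring

theorem stmt15 {n : ℕ} (b : Fin n → Fin n → ℤ)
    (hF : IsKeller (cubicLinear b))
    (w : Fin n → ℤ) (hw : ∀ i, w i ≠ 0)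
    (v : Fin n → ℤ) (hv : ∀ i, v i = w i ^ 3)
    (δ : ℤ) (hδ : δ = ∏ i, v i)
    (a : Fin n → Fin n → ℤ)
    (ha : ∀ i j, a i j = w i * (∏ k ∈ Finset.univ.erase i, w k ^ 2) * w j ^ 3 * b i j) :
    IsKeller (cubicLinear a) ∧
    ∀ x : Fin n → ℤ,
      (∀ i j, eval x (cubicLinear a i) = eval x (cubicLinear a j)) →
      ∃ t : ℚ, ∀ i, ((eval (fun k => δ * v k * x k) (cubicLinear b i) : ℤ) : ℚ)
        = t * (v i : ℚ) :=
  stmt15_general b hF w v hv δ hδ a ha
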